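/- Suppose ρ, Λ are smooth scalar fields and u, B smooth vector fields on ℝ³ × ℝ such that ∂ρ/∂t + ∇·(ρu) = 0, ∂B/∂t − ∇×(u×B) = 0, ∇·B = 0, and dΛ/dt := ∂Λ/∂t + u·∇Λ = 0. Then ∂(B·∇Λ)/∂t + ∇·[(B·∇Λ)u] = 0. -/

import Mathlib

open scoped BigOperators
open MeasureTheory

noncomputable section

abbrev V3 : Type := Fin 3 → ℝ

/-- Partial derivative of a scalar field in coordinate direction `i`. -/
noncomputable def pd (f : V3 → ℝ) (i : Fin 3) (x : V3) : ℝ :=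
  fderiv ℝ f x (Pi.single i 1)

/-- Gradient of a scalar field on ℝ³. -/
noncomputable def grad3 (f : V3 → ℝ) (x : V3) : V3 := fun i => pd f i x

/-- Divergence of a vector field on ℝ³. -/
noncomputable def div3 (F : V3 → V3) (x : V3) : ℝ := ∑ i, pd (fun y => F y i) i x

/-- Curl of a vector field on ℝ³. -/
noncomputable def curl3 (F : V3 → V3) (x : V3) : V3 :=
  ![pd (fun y => F y 2) 1 x - pd (fun y => F y 1) 2 x,
    pd (fun y => F y 0) 2 x - pd (fun y => F y 2) 0 x,
    pd (fun y => F y 1) 0 x - pd (fun y => F y 0) 1 x]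

/-- Cross product in ℝ³. -/
def cross3 (a b : V3) : V3 :=
  ![a 1 * b 2 - a 2 * b 1, a 2 * b 0 - a 0 * b 2, a 0 * b 1 - a 1 * b 0]

/-- Dot product in ℝ³. -/
def dot3 (a b : V3) : ℝ := ∑ i, a i * b i

/-- Advective derivative (F·∇)G of a vector field G along F. -/
noncomputable def advD (F G : V3 → V3) (x : V3) : V3 :=
  fun j => ∑ i, F x i * pd (fun y => G y j) i x

/-- Time partial derivative of a time-dependent vector field. -/
noncomputable def dtV (F : ℝ → V3 → V3) (t : ℝ) (x : V3) : V3 :=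
  fun i => deriv (fun s => F s x i) t

/-- Time partial derivative of a time-dependent scalar field. -/
noncomputable def dtS (f : ℝ → V3 → ℝ) (t : ℝ) (x : V3) : ℝ :=
  deriv (fun s => f s x) t

/-- Smooth time-dependent vector field. -/
def SmoothTV (F : ℝ → V3 → V3) : Prop := ContDiff ℝ (⊤ : ℕ∞) (Function.uncurry F)

/-- Smooth time-dependent scalar field. -/
def SmoothTS (f : ℝ → V3 → ℝ) : Prop := ContDiff ℝ (⊤ : ℕ∞) (Function.uncurry f)

/-- Smooth (static) vector field. -/
def SmoothV (F : V3 → V3) : Prop := ContDiff ℝ (⊤ : ℕ∞) F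

/-- Smooth (static) scalar field. -/
def SmoothS (f : V3 → ℝ) : Prop := ContDiff ℝ (⊤ : ℕ∞) f

/-!
On space-time `ℝ × ℝ³` consider the vector fields `U = ∂ₜ + u·∇` and `X = B·∇`. The advection
equation says `U Λ = 0`, and the induction equation together with `∇·B = 0` says
`[U, X] = -(∇·u) X`, because `∇×(u×B) = (∇·B) u - (∇·u) B + (B·∇)u - (u·∇)B`. Hence
`φ = X Λ = B·∇Λ` satisfies `U φ = X (U Λ) + [U, X] Λ = -(∇·u) φ`, which is the conservation law
`∂ₜφ + ∇·(φ u) = U φ + (∇·u) φ = 0`.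
-/

open Function VectorField

section

variable {𝕜 : Type*} [NontriviallyNormedField 𝕜]
  {E F G : Type*} [NormedAddCommGroup E] [NormedSpace 𝕜 E] [NormedAddCommGroup F]
  [NormedSpace 𝕜 F] [NormedAddCommGroup G] [NormedSpace 𝕜 G]

theorem fderiv_fderiv_apply_of_lieBracket_eq_smul {L : E → F} {U X : E → E} {x : E} {c : 𝕜}
    {n : WithTop ℕ∞} (hL : ContDiffAt 𝕜 n L x) (hn : minSmoothness 𝕜 2 ≤ n)
    (hU : DifferentiableAt 𝕜 U x) (hX : DifferentiableAt 𝕜 X x)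
    (hUL : ∀ q, fderiv 𝕜 L q (U q) = 0) (hUX : lieBracket 𝕜 U X x = c • X x) :
    fderiv 𝕜 (fun q => fderiv 𝕜 L q (X q)) x (U x) = c • fderiv 𝕜 L x (X x) := by
  have h := fderiv_apply_lieBracket hL hn hX hU
  rw [hUX, map_smul, show (fun q => fderiv 𝕜 L q (U q)) = fun _ => 0 from funext hUL] at h
  simpa using h.symm

theorem DifferentiableAt.of_uncurry {f : E → F → G} {a : E} {b : F}
    (hf : DifferentiableAt 𝕜 (uncurry f) (a, b)) : DifferentiableAt 𝕜 (f a) b :=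
  hf.comp b ((differentiableAt_const a).prodMk differentiableAt_id)

end

theorem ContinuousLinearMap.apply_prod_pi_eq {n : ℕ} {M : Type*} [AddCommGroup M] [Module ℝ M]
    [TopologicalSpace M] (ℓ : ℝ × (Fin n → ℝ) →L[ℝ] M) (a : ℝ) (v : Fin n → ℝ) :
    ℓ (a, v) = a • ℓ (1, 0) + ∑ i, v i • ℓ (0, Pi.single i 1) := by
  have hv : ((a, v) : ℝ × (Fin n → ℝ)) = a • (1, 0) + ∑ i, v i • ((0 : ℝ), Pi.single i 1) := by
    ext <;> simp [Prod.fst_sum, Prod.snd_sum, Finset.sum_apply, Pi.single_apply]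
  rw [hv]
  simp only [map_add, map_sum, map_smul]

section StaticFields

variable {x : V3}

theorem pd_mul {f g : V3 → ℝ} (hf : DifferentiableAt ℝ f x) (hg : DifferentiableAt ℝ g x)
    (i : Fin 3) : pd (fun y => f y * g y) i x = f x * pd g i x + g x * pd f i x := by
  simp [pd, fderiv_fun_mul hf hg]

theorem pd_sub {f g : V3 → ℝ} (hf : DifferentiableAt ℝ f x) (hg : DifferentiableAt ℝ g x)
    (i : Fin 3) : pd (fun y => f y - g y) i x = pd f i x - pd g i x := by
  simp [pd, fderiv_fun_sub hf hg]

theorem div3_smul {f : V3 → ℝ} {F : V3 → V3} (hf : DifferentiableAt ℝ f x)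
    (hF : DifferentiableAt ℝ F x) :
    div3 (fun y => f y • F y) x = dot3 (F x) (grad3 f x) + f x * div3 F x := by
  simp only [div3, dot3, grad3, Pi.smul_apply, smul_eq_mul,
    pd_mul hf (differentiableAt_pi.mp hF _), Finset.mul_sum, ← Finset.sum_add_distrib]
  exact Finset.sum_congr rfl fun i _ => by ring

theorem curl3_cross3 {F G : V3 → V3} (hF : DifferentiableAt ℝ F x)
    (hG : DifferentiableAt ℝ G x) :
    curl3 (fun y => cross3 (F y) (G y)) x
      = div3 G x • F x - div3 F x • G x + advD G F x - advD F G x := by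
  have hFi := differentiableAt_pi.mp hF
  have hGi := differentiableAt_pi.mp hG
  ext j
  fin_cases j <;>
    simp [curl3, cross3, div3, advD, Fin.sum_univ_three, pd_sub, pd_mul, hFi, hGi] <;> ring

end StaticFields

section SpaceTime

variable {t : ℝ} {x : V3}

theorem pd_eq_fderiv_uncurry {f : ℝ → V3 → ℝ} (hf : DifferentiableAt ℝ (uncurry f) (t, x))
    (i : Fin 3) : pd (f t) i x = fderiv ℝ (uncurry f) (t, x) (0, Pi.single i 1) := by
  have h : HasFDerivAt (f t) _ x := hf.hasFDerivAt.comp x (hasFDerivAt_prodMk_right t x)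
  rw [pd, h.fderiv]
  rfl

theorem dtS_eq_fderiv_uncurry {f : ℝ → V3 → ℝ} (hf : DifferentiableAt ℝ (uncurry f) (t, x)) :
    dtS f t x = fderiv ℝ (uncurry f) (t, x) (1, 0) := by
  have h : HasDerivAt (fun s : ℝ => (s, x)) (1, 0) t :=
    (hasDerivAt_id t).prodMk (hasDerivAt_const t x)
  exact (hf.hasFDerivAt.comp_hasDerivAt t h).deriv

theorem fderiv_uncurry_apply {f : ℝ → V3 → ℝ} (hf : DifferentiableAt ℝ (uncurry f) (t, x))
    (a : ℝ) (v : V3) :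
    fderiv ℝ (uncurry f) (t, x) (a, v) = a * dtS f t x + dot3 v (grad3 (f t) x) := by
  simp only [ContinuousLinearMap.apply_prod_pi_eq _ a v, dtS_eq_fderiv_uncurry hf, dot3, grad3,
    pd_eq_fderiv_uncurry hf, smul_eq_mul]

theorem fderiv_uncurry_apply_apply {F : ℝ → V3 → V3}
    (hF : DifferentiableAt ℝ (uncurry F) (t, x)) (a : ℝ) (v : V3) (j : Fin 3) :
    fderiv ℝ (uncurry F) (t, x) (a, v) j
      = a * dtV F t x j + dot3 v (grad3 (fun y => F t y j) x) := by
  have h := fderiv_uncurry_apply (f := fun s y => F s y j) (differentiableAt_pi.mp hF j) a v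
  rw [show uncurry (fun s y => F s y j) = fun q => uncurry F q j from rfl, fderiv_apply hF j] at h
  exact h

/-- On space-time `ℝ × ℝ³`, `spaceTimeField 1 u` is the material derivative `∂ₜ + u·∇` and
`spaceTimeField 0 B` is `B·∇` at fixed time. -/
def spaceTimeField (c : ℝ) (F : ℝ → V3 → V3) : ℝ × V3 → ℝ × V3 := fun q => (c, uncurry F q)

theorem Differentiable.spaceTimeField {c : ℝ} {F : ℝ → V3 → V3}
    (hF : Differentiable ℝ (uncurry F)) : Differentiable ℝ (spaceTimeField c F) :=
  (differentiable_const c).prodMk hF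

theorem fderiv_uncurry_apply_spaceTimeField {f : ℝ → V3 → ℝ} {q : ℝ × V3}
    (hf : DifferentiableAt ℝ (uncurry f) q) (c : ℝ) (F : ℝ → V3 → V3) :
    fderiv ℝ (uncurry f) q (spaceTimeField c F q)
      = c * dtS f q.1 q.2 + dot3 (F q.1 q.2) (grad3 (f q.1) q.2) :=
  fderiv_uncurry_apply hf c _

theorem fderiv_spaceTimeField {c : ℝ} {F : ℝ → V3 → V3} {q : ℝ × V3}
    (hF : DifferentiableAt ℝ (uncurry F) q) (w : ℝ × V3) :
    fderiv ℝ (spaceTimeField c F) q w = (0, fderiv ℝ (uncurry F) q w) := by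
  have h : HasFDerivAt (spaceTimeField c F) _ q := (hasFDerivAt_const c q).prodMk hF.hasFDerivAt
  rw [h.fderiv]
  simp

theorem lieBracket_spaceTimeField {u B : ℝ → V3 → V3}
    (hu : DifferentiableAt ℝ (uncurry u) (t, x)) (hB : DifferentiableAt ℝ (uncurry B) (t, x)) :
    lieBracket ℝ (spaceTimeField 1 u) (spaceTimeField 0 B) (t, x)
      = (0, dtV B t x + advD (u t) (B t) x - advD (B t) (u t) x) := by
  ext j
  · simp [lieBracket, fderiv_spaceTimeField hu, fderiv_spaceTimeField hB]
  · simp only [lieBracket, fderiv_spaceTimeField hu, fderiv_spaceTimeField hB, spaceTimeField,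
      Prod.snd_sub, Pi.sub_apply, Pi.add_apply, fderiv_uncurry_apply_apply hu,
      fderiv_uncurry_apply_apply hB]
    simp [advD, dot3, grad3]

theorem lieBracket_spaceTimeField_of_induction {u B : ℝ → V3 → V3}
    (hu : DifferentiableAt ℝ (uncurry u) (t, x)) (hB : DifferentiableAt ℝ (uncurry B) (t, x))
    (hind : dtV B t x - curl3 (fun y => cross3 (u t y) (B t y)) x = 0)
    (hdivB : div3 (B t) x = 0) :
    lieBracket ℝ (spaceTimeField 1 u) (spaceTimeField 0 B) (t, x)
      = -div3 (u t) x • spaceTimeField 0 B (t, x) := by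
  rw [lieBracket_spaceTimeField hu hB, sub_eq_zero.mp hind,
    curl3_cross3 hu.of_uncurry hB.of_uncurry, hdivB]
  ext <;> simp [spaceTimeField]

theorem dtS_add_div3_smul {φ : ℝ → V3 → ℝ} {u : ℝ → V3 → V3}
    (hφ : DifferentiableAt ℝ (uncurry φ) (t, x)) (hu : DifferentiableAt ℝ (uncurry u) (t, x)) :
    dtS φ t x + div3 (fun y => φ t y • u t y) x
      = fderiv ℝ (uncurry φ) (t, x) (1, u t x) + φ t x * div3 (u t) x := by
  rw [div3_smul hφ.of_uncurry hu.of_uncurry, fderiv_uncurry_apply hφ]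
  ring

end SpaceTime

theorem advected_scalar_conservation_general
    (Λ : ℝ → V3 → ℝ) (u B : ℝ → V3 → V3)
    (hΛ : SmoothTS Λ) (hu : SmoothTV u) (hB : SmoothTV B)
    (hFar : ∀ t x, dtV B t x - curl3 (fun y => cross3 (u t y) (B t y)) x = 0)
    (hdivB : ∀ t x, div3 (B t) x = 0)
    (hadv : ∀ t x, dtS Λ t x + dot3 (u t x) (grad3 (Λ t) x) = 0) :
    ∀ t x, dtS (fun s y => dot3 (B s y) (grad3 (Λ s) y)) t x
      + div3 (fun y => dot3 (B t y) (grad3 (Λ t) y) • u t y) x = 0 := by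
  intro t x
  set φ : ℝ → V3 → ℝ := fun s y => dot3 (B s y) (grad3 (Λ s) y)
  have hΛ2 : ContDiff ℝ 2 (uncurry Λ) := hΛ.of_le (WithTop.coe_le_coe.mpr le_top)
  have hΛ1 : Differentiable ℝ (uncurry Λ) := hΛ2.differentiable two_ne_zero
  have hu1 : Differentiable ℝ (uncurry u) := hu.differentiable (by simp)
  have hB1 : Differentiable ℝ (uncurry B) := hB.differentiable (by simp)
  have hφ : uncurry φ = fun q => fderiv ℝ (uncurry Λ) q (spaceTimeField 0 B q) := by
    funext ⟨s, y⟩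
    simp [φ, fderiv_uncurry_apply_spaceTimeField (hΛ1 _)]
  have hφ1 : Differentiable ℝ (uncurry φ) := hφ ▸
    ((hΛ2.fderiv_right le_rfl).differentiable one_ne_zero).clm_apply hB1.spaceTimeField
  have hUΛ : ∀ q, fderiv ℝ (uncurry Λ) q (spaceTimeField 1 u q) = 0 := fun q => by
    simpa [fderiv_uncurry_apply_spaceTimeField (hΛ1 q)] using hadv q.1 q.2
  have hUφ : fderiv ℝ (uncurry φ) (t, x) (1, u t x) = -div3 (u t) x * φ t x := by
    rw [show φ t x = uncurry φ (t, x) from rfl, hφ]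
    exact fderiv_fderiv_apply_of_lieBracket_eq_smul hΛ2.contDiffAt (by simp)
      (hu1.spaceTimeField _) (hB1.spaceTimeField _) hUΛ
      (lieBracket_spaceTimeField_of_induction (hu1 _) (hB1 _) (hFar t x) (hdivB t x))
  rw [dtS_add_div3_smul (hφ1 _) (hu1 _), hUφ]
  ring

theorem advected_scalar_conservation
    (ρ Λ : ℝ → V3 → ℝ) (u B : ℝ → V3 → V3)
    (hρ : SmoothTS ρ) (hΛ : SmoothTS Λ) (hu : SmoothTV u) (hB : SmoothTV B)
    (hcont : ∀ t x, dtS ρ t x + div3 (fun y => ρ t y • u t y) x = 0)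
    (hFar : ∀ t x, dtV B t x - curl3 (fun y => cross3 (u t y) (B t y)) x = 0)
    (hdivB : ∀ t x, div3 (B t) x = 0)
    (hadv : ∀ t x, dtS Λ t x + dot3 (u t x) (grad3 (Λ t) x) = 0) :
    ∀ t x, dtS (fun s y => dot3 (B s y) (grad3 (Λ s) y)) t x
      + div3 (fun y => dot3 (B t y) (grad3 (Λ t) y) • u t y) x = 0 :=
  advected_scalar_conservation_general Λ u B hΛ hu hB hFar hdivB hadv

end
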